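/- For every tree T, there exists a minimum-cardinality fixing set of T consisting entirely of leaves of T. -/

import Mathlib

open SimpleGraph

/-- A set `S` of vertices is a fixing set of `G` if the only automorphism of `G`
fixing every vertex of `S` is the identity. -/
def IsFixingSet {V : Type*} (G : SimpleGraph V) (S : Set V) : Prop :=
  ∀ φ : G ≃g G, (∀ v ∈ S, φ v = v) → ∀ v, φ v = v

/-- The fixing number of a finite graph: the minimum cardinality of a fixing set. -/
noncomputable def fixingNumber {V : Type*} [Fintype V] (G : SimpleGraph V) : ℕ :=
  sInf {n | ∃ S : Finset V, S.card = n ∧ IsFixingSet G ↑S}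

/-- A coloring is distinguishing if the only color-preserving automorphism is the identity. -/
def IsDistinguishingColoring {V α : Type*} (G : SimpleGraph V) (c : V → α) : Prop :=
  ∀ φ : G ≃g G, (∀ v, c (φ v) = c v) → ∀ v, φ v = v

/-- `G` is `D`-distinguishable if it has a distinguishing coloring with at most `D` colors. -/
def Distinguishable {V : Type*} (G : SimpleGraph V) (D : ℕ) : Prop :=
  ∃ c : V → Fin D, IsDistinguishingColoring G c

/-- The distinguishing number of `G`. -/
noncomputable def distinguishingNumber {V : Type*} (G : SimpleGraph V) : ℕ :=
  sInf {D | Distinguishable G D}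

/-- Eccentricity of a vertex: the supremum of distances to other vertices. -/
noncomputable def ecc {V : Type*} (G : SimpleGraph V) (v : V) : ℕ :=
  sSup (Set.range (G.dist v))

/-!
Start from a minimum fixing set and trade its non-leaves for leaves one at a time. To trade `u`,
choose an anchor `a` that every automorphism fixing the rest of the set and some vertex must
fix: another element of the set, or else a vertex of minimum eccentricity (in a tree these form
a single vertex or an edge, and an automorphism with a fixed point cannot swap the ends of an
edge, as they lie at different distances from that point). Extend the path from `a` through `u`
to a leaf `l`. An automorphism fixing `l` and the rest of the set fixes `a` and `l`, hence the
unique `a`–`l` path, hence `u`.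
-/

section FixingSet

variable {V : Type*}

lemma isFixingSet_of_subsingleton [Subsingleton V] (G : SimpleGraph V) (S : Set V) :
    IsFixingSet G S :=
  fun _ _ _ ↦ Subsingleton.elim _ _

lemma fixingNumber_le_card [Fintype V] {G : SimpleGraph V} {S : Finset V}
    (hS : IsFixingSet G ↑S) : fixingNumber G ≤ S.card :=
  Nat.sInf_le ⟨S, rfl, hS⟩

lemma exists_isFixingSet_card_eq_fixingNumber [Fintype V] (G : SimpleGraph V) :
    ∃ S : Finset V, IsFixingSet G ↑S ∧ S.card = fixingNumber G := by
  obtain ⟨S, hcard, hS⟩ :=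
    Nat.sInf_mem (s := {n | ∃ S : Finset V, S.card = n ∧ IsFixingSet G ↑S})
      ⟨_, Finset.univ, rfl, fun _ h v ↦ h v (by simp)⟩
  exact ⟨S, hS, hcard⟩

end FixingSet

namespace SimpleGraph

variable {V : Type*} {G : SimpleGraph V}

lemma dist_le_ecc [Finite V] (G : SimpleGraph V) (v x : V) : G.dist v x ≤ ecc G v :=
  le_csSup (Set.finite_range _).bddAbove ⟨x, rfl⟩

lemma ecc_le [Nonempty V] {v : V} {n : ℕ} (h : ∀ x, G.dist v x ≤ n) : ecc G v ≤ n :=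
  csSup_le (Set.range_nonempty _) (Set.forall_mem_range.2 h)

lemma Iso.dist_eq {W : Type*} {H : SimpleGraph W} (φ : G ≃g H) (u v : V) :
    H.dist (φ u) (φ v) = G.dist u v := by
  rw [dist_eq_sInf, dist_eq_sInf]
  congr 1
  ext n
  constructor
  · rintro ⟨w, rfl⟩
    exact ⟨(w.map φ.symm.toHom).copy (φ.symm_apply_apply u) (φ.symm_apply_apply v), by simp⟩
  · rintro ⟨w, rfl⟩
    exact ⟨w.map φ.toHom, by simp⟩

lemma Iso.ecc_apply (φ : G ≃g G) (v : V) : ecc G (φ v) = ecc G v := by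
  have hcomp : G.dist (φ v) ∘ φ = G.dist v := funext (φ.dist_eq v)
  rw [ecc, ecc, ← hcomp, φ.surjective.range_comp]

namespace IsTree

lemma length_eq_dist (hT : G.IsTree) {u v : V} {p : G.Walk u v} (hp : p.IsPath) :
    p.length = G.dist u v := by
  obtain ⟨q, hq, hlen⟩ := hT.connected.exists_path_of_dist u v
  rw [(hT.existsUnique_path u v).unique hp hq, hlen]

lemma dist_add_dist_of_mem_support (hT : G.IsTree) {u v w : V} {p : G.Walk u v}
    (hp : p.IsPath) (hw : w ∈ p.support) : G.dist u w + G.dist w v = G.dist u v := by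
  classical
  rw [← hT.length_eq_dist hp, ← hT.length_eq_dist (hp.takeUntil hw),
    ← hT.length_eq_dist (hp.dropUntil hw), ← Walk.length_append, p.take_spec hw]

lemma support_subset_support (hT : G.IsTree) {u v : V} {p : G.Walk u v} (hp : p.IsPath)
    (q : G.Walk u v) : p.support ⊆ q.support := by
  classical
  rw [(hT.existsUnique_path u v).unique hp q.bypass_isPath]
  exact q.support_bypass_subset_support

lemma apply_eq_of_mem_support (hT : G.IsTree) (φ : G ≃g G) {x y v : V} {p : G.Walk x y}
    (hp : p.IsPath) (hx : φ x = x) (hy : φ y = y) (hv : v ∈ p.support) : φ v = v := by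
  have hφp : (p.map φ.toHom).copy hx hy = p :=
    (hT.existsUnique_path x y).unique ((Walk.isPath_copy _ _ _).2 (hp.map φ.injective)) hp
  obtain ⟨i, rfl, -⟩ := Walk.mem_support_iff_exists_getVert.1 hv
  conv_rhs => rw [← hφp]
  simp

lemma eq_or_adj_of_ecc_le [Finite V] (hT : G.IsTree) {c c' : V}
    (hc : ∀ v, ecc G c ≤ ecc G v) (h : ecc G c' ≤ ecc G c) : c' = c ∨ G.Adj c c' := by
  have := hT.connected.nonempty
  by_contra! hne
  obtain ⟨p, hp⟩ := hT.connected.exists_isPath c c'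
  have hdist : 2 ≤ G.dist c c' := by
    have h0 : G.dist c c' ≠ 0 := fun h ↦ hne.1 (hT.connected.dist_eq_zero_iff.1 h).symm
    have h1 : G.dist c c' ≠ 1 := fun h ↦ hne.2 (dist_eq_one_iff_adj.1 h)
    omega
  -- The neighbour `p.snd` of `c` towards `c'` would have smaller eccentricity than `c`.
  have hm : p.snd ∈ p.support := p.getVert_mem_support 1
  have hcm : G.dist c p.snd = 1 := dist_eq_one_iff_adj.2 (p.adj_snd (Walk.not_nil_of_ne hne.1.symm))
  have hmc' := hT.dist_add_dist_of_mem_support hp hm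
  have hbound : ∀ x, G.dist p.snd x + 1 ≤ ecc G c := by
    intro x
    obtain ⟨q, hq⟩ := hT.connected.exists_isPath x c
    obtain ⟨q', hq'⟩ := hT.connected.exists_isPath x c'
    have hmem := hT.support_subset_support hp (q.reverse.append q') hm
    rw [Walk.mem_support_append_iff, Walk.support_reverse, List.mem_reverse] at hmem
    rw [dist_comm]
    rcases hmem with hmq | hmq'
    · have := hT.dist_add_dist_of_mem_support hq hmq
      have := G.dist_le_ecc c x
      rw [dist_comm] at hcm this
      omega
    · have := hT.dist_add_dist_of_mem_support hq' hmq'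
      have := G.dist_le_ecc c' x
      rw [dist_comm] at this
      omega
  have := hc p.snd
  have := ecc_le fun x ↦ Nat.le_sub_of_add_le (hbound x)
  have := G.dist_le_ecc c c'
  omega

lemma exists_forall_apply_eq_of_apply_eq [Finite V] (hT : G.IsTree) :
    ∃ c, ∀ (φ : G ≃g G) (x : V), φ x = x → φ c = c := by
  have := hT.connected.nonempty
  obtain ⟨c, hc⟩ := Finite.exists_min (ecc G)
  refine ⟨c, fun φ x hx ↦ (hT.eq_or_adj_of_ecc_le hc (φ.ecc_apply c).le).resolve_right ?_⟩
  intro hadj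
  apply hT.dist_ne_of_adj x hadj
  rw [← φ.dist_eq, hx]

lemma exists_degree_eq_one_isPath_mem_support [Fintype V] [DecidableRel G.Adj] [Nontrivial V]
    (hT : G.IsTree) (c u : V) :
    ∃ l, G.degree l = 1 ∧ ∃ p : G.Walk c l, p.IsPath ∧ u ∈ p.support := by
  classical
  choose P hP using hT.connected.exists_isPath c
  obtain ⟨l, hl, hmax⟩ := (Finset.univ.filter fun x ↦ u ∈ (P x).support).exists_max_image
    (fun x ↦ (P x).length) ⟨u, by simp⟩
  simp only [Finset.mem_filter, Finset.mem_univ, true_and] at hl hmax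
  refine ⟨l, ?_, P l, hP l, hl⟩
  -- A neighbour of `l` off the path `P l` would extend it to a longer path through `u`.
  have hnbr : ∀ y, G.Adj l y → y = (P l).penultimate := fun y hy ↦
    hT.isAcyclic.eq_penultimate_of_adj_end (hP l) hy <| by
      by_contra hy'
      have hext : P y = (P l).concat hy :=
        (hT.existsUnique_path c y).unique (hP y) ((hP l).concat hy' hy)
      have := hmax y (hext ▸ (P l).support_subset_support_concat hy hl)
      rw [hext, Walk.length_concat] at this
      omega
  obtain ⟨w, hw⟩ :=
    (G.degree_pos_iff_exists_adj l).1 (hT.connected.preconnected.degree_pos_of_nontrivial l)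
  exact degree_eq_one_iff_existsUnique_adj.2
    ⟨w, hw, fun y hy ↦ (hnbr y hy).trans (hnbr w hw).symm⟩

lemma exists_degree_eq_one_isFixingSet_insert_erase [Fintype V] [DecidableRel G.Adj]
    [Nontrivial V] [DecidableEq V] (hT : G.IsTree) {S : Finset V} (hS : IsFixingSet G ↑S)
    (u : V) : ∃ l, G.degree l = 1 ∧ IsFixingSet G ↑(insert l (S.erase u)) := by
  obtain ⟨a, ha⟩ :
      ∃ a, ∀ φ : G ≃g G, (∀ v ∈ S.erase u, φ v = v) → ∀ x, φ x = x → φ a = a := by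
    by_cases hne : (S.erase u).Nonempty
    · obtain ⟨w, hw⟩ := hne
      exact ⟨w, fun φ hφ _ _ ↦ hφ w hw⟩
    · obtain ⟨c, hc⟩ := hT.exists_forall_apply_eq_of_apply_eq
      exact ⟨c, fun φ _ ↦ hc φ⟩
  obtain ⟨l, hl, p, hp, hu⟩ := hT.exists_degree_eq_one_isPath_mem_support a u
  refine ⟨l, hl, fun φ hφ ↦ hS φ fun v hv ↦ ?_⟩
  have hφS : ∀ v ∈ S.erase u, φ v = v := fun v hv ↦ hφ v (Finset.mem_insert_of_mem hv)
  have hφl : φ l = l := hφ l (by simp)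
  obtain rfl | hvu := eq_or_ne v u
  · exact hT.apply_eq_of_mem_support φ hp (ha φ hφS l hφl) hφl hu
  · exact hφS v (Finset.mem_erase.2 ⟨hvu, hv⟩)

lemma exists_isFixingSet_card_le_forall_degree_eq_one [Fintype V] [DecidableRel G.Adj]
    (hT : G.IsTree) {S : Finset V} (hS : IsFixingSet G ↑S) :
    ∃ S' : Finset V, IsFixingSet G ↑S' ∧ S'.card ≤ S.card ∧ ∀ v ∈ S', G.degree v = 1 := by
  classical
  rcases subsingleton_or_nontrivial V with _ | _
  · exact ⟨∅, isFixingSet_of_subsingleton G _, by simp, by simp⟩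
  obtain ⟨S', hS', hmin⟩ :=
    (Finset.univ.filter fun T : Finset V ↦ IsFixingSet G ↑T ∧ T.card ≤ S.card).exists_min_image
      (fun T ↦ (T.filter (G.degree · ≠ 1)).card) ⟨S, by simp [hS]⟩
  simp only [Finset.mem_filter, Finset.mem_univ, true_and] at hS' hmin
  refine ⟨S', hS'.1, hS'.2, fun u hu ↦ by_contra fun hdeg ↦ ?_⟩
  have hu' : u ∈ S'.filter (G.degree · ≠ 1) := Finset.mem_filter.2 ⟨hu, hdeg⟩
  obtain ⟨l, hl, hfix⟩ := hT.exists_degree_eq_one_isFixingSet_insert_erase hS'.1 u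
  have hcard : (insert l (S'.erase u)).card ≤ S.card := by
    have := Finset.card_insert_le l (S'.erase u)
    rw [Finset.card_erase_of_mem hu] at this
    have := Finset.card_pos.2 ⟨u, hu⟩
    omega
  have := hmin _ ⟨hfix, hcard⟩
  rw [Finset.filter_insert, if_neg (not_not.2 hl), Finset.filter_erase,
    Finset.card_erase_of_mem hu'] at this
  have := Finset.card_pos.2 ⟨u, hu'⟩
  omega

end IsTree

end SimpleGraph

theorem exists_min_fixing_set_of_leaves
    {V : Type*} [Fintype V] (G : SimpleGraph V) [DecidableRel G.Adj]
    (hT : G.IsTree) :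
    ∃ S : Finset V, IsFixingSet G ↑S ∧ S.card = fixingNumber G ∧
      ∀ v ∈ S, G.degree v = 1 := by
  obtain ⟨S, hS, hcard⟩ := exists_isFixingSet_card_eq_fixingNumber G
  obtain ⟨S', hS', hle, hleaf⟩ := hT.exists_isFixingSet_card_le_forall_degree_eq_one hS
  exact ⟨S', hS', le_antisymm (hcard ▸ hle) (fixingNumber_le_card hS'), hleaf⟩
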